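/- arXiv:1503.01690 — 5 statements merged into one kernel-verified Lean document; each statement's English description precedes it below -/
import Mathlib

section
/- Let h ≥ 3 and v ≥ 1 be integers. If there exists a (K_2,S(C_h))-URD(v;r,s) with s > 0, then s is even. -/
open SimpleGraph

/-- The `h`-sun `S(C_h)`: an `h`-cycle on the vertices `Sum.inl i` together with
a pendant edge from each cycle vertex `Sum.inl i` to the pendant vertex `Sum.inr i`. -/
def sunGraph (h : ℕ) : SimpleGraph (Fin h ⊕ Fin h) :=
  SimpleGraph.fromRel fun u w =>
    (∃ i j : Fin h, u = Sum.inl i ∧ w = Sum.inl j ∧ (i.val + 1) % h = j.val) ∨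
    (∃ i : Fin h, u = Sum.inl i ∧ w = Sum.inr i)

/-- `H` is a parallel class of `h`-suns: `H` is the vertex-disjoint union of
copies of the `h`-sun, and every vertex lies in exactly one copy. -/
def IsSunClass (h : ℕ) {V : Type*} (H : SimpleGraph V) : Prop :=
  ∃ (k : ℕ) (φ : Fin k → Fin h ⊕ Fin h → V),
    (∀ x : V, ∃! p : Fin k × (Fin h ⊕ Fin h), φ p.1 p.2 = x) ∧
    ∀ x y, H.Adj x y ↔ ∃ a u w, (sunGraph h).Adj u w ∧ φ a u = x ∧ φ a w = y

/-- `H` is a parallel class of copies of `K₂`, i.e. a perfect matching: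
every vertex is adjacent to exactly one other vertex. -/
def IsMatchingClass {V : Type*} (H : SimpleGraph V) : Prop :=
  ∀ x : V, ∃! y : V, H.Adj x y

/-- A `(K₂, S(C_h))`-URGDD`(r,s)` of the graph `G`: a decomposition of the
edge set of `G` into `r` parallel classes of single edges (perfect matchings)
and `s` parallel classes of `h`-suns. -/
def IsURGDD {V : Type*} (G : SimpleGraph V) (h r s : ℕ) : Prop :=
  ∃ C : Fin r ⊕ Fin s → SimpleGraph V,
    (∀ i, C i ≤ G) ∧
    (∀ x y, G.Adj x y → ∃! i, (C i).Adj x y) ∧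
    (∀ i : Fin r, IsMatchingClass (C (Sum.inl i))) ∧
    (∀ j : Fin s, IsSunClass h (C (Sum.inr j)))

/-- A `(K₂, S(C_h))`-URD`(v;r,s)`: a uniformly resolvable decomposition of the
complete graph `K_v` into `r` perfect matchings and `s` parallel classes of `h`-suns. -/
def IsURD (v h r s : ℕ) : Prop :=
  IsURGDD (⊤ : SimpleGraph (Fin v)) h r s

namespace URDAux

lemma mod_small (a h : ℕ) (ha : a < 2*h) : a % h = if a < h then a else a - h := by
  split
  · exact Nat.mod_eq_of_lt ‹_›
  · rw [Nat.mod_eq_sub_mod (by omega), Nat.mod_eq_of_lt (by omega)]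

def nxt {h : ℕ} (i : Fin h) : Fin h := ⟨(i.val+1) % h, Nat.mod_lt _ i.pos⟩
def prv {h : ℕ} (i : Fin h) : Fin h := ⟨(i.val+(h-1)) % h, Nat.mod_lt _ i.pos⟩

lemma sun_adj_inr (h : ℕ) (i : Fin h) (w : Fin h ⊕ Fin h) :
    (sunGraph h).Adj (Sum.inr i) w ↔ w = Sum.inl i := by
  cases w <;> simp [sunGraph, fromRel_adj, eq_comm]

lemma sun_adj_inl (h : ℕ) (hh : 3 ≤ h) (i : Fin h) (w : Fin h ⊕ Fin h) :
    (sunGraph h).Adj (Sum.inl i) w ↔ w = Sum.inl (nxt i) ∨ w = Sum.inl (prv i) ∨ w = Sum.inr i := by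
  have hi := i.isLt
  cases w with
  | inr j =>
    simp [sunGraph, fromRel_adj, eq_comm]
  | inl j =>
    have hj := j.isLt
    simp only [sunGraph, fromRel_adj, Sum.inl.injEq, Sum.inr.injEq, ne_eq,
      reduceCtorEq, and_false, false_and, exists_false,
      or_false, false_or]
    simp only [exists_and_left, exists_eq_left', exists_eq_left]
    simp only [Fin.ext_iff, nxt, prv]
    rw [mod_small (i.val+1) h (by omega), mod_small (j.val+1) h (by omega),
      mod_small (i.val+(h-1)) h (by omega)]
    split_ifs <;> omega

open scoped Classical

noncomputable def fdeg {V : Type*} [Fintype V] (H : SimpleGraph V) (x : V) : ℕ :=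
  (Finset.univ.filter fun y => H.Adj x y).card

lemma nxt_ne (h : ℕ) (hh : 3 ≤ h) (i : Fin h) : Sum.inl (nxt i) ≠ (Sum.inl i : Fin h ⊕ Fin h) := by
  have hi := i.isLt
  simp only [ne_eq, Sum.inl.injEq, Fin.ext_iff, nxt]
  rw [mod_small (i.val+1) h (by omega)]
  split_ifs <;> omega

lemma prv_ne (h : ℕ) (hh : 3 ≤ h) (i : Fin h) : Sum.inl (prv i) ≠ (Sum.inl i : Fin h ⊕ Fin h) := by
  have hi := i.isLt
  simp only [ne_eq, Sum.inl.injEq, Fin.ext_iff, prv]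
  rw [mod_small (i.val+(h-1)) h (by omega)]
  split_ifs <;> omega

lemma nxt_ne_prv (h : ℕ) (hh : 3 ≤ h) (i : Fin h) : nxt i ≠ prv i := by
  have hi := i.isLt
  simp only [ne_eq, Fin.ext_iff, nxt, prv]
  rw [mod_small (i.val+1) h (by omega), mod_small (i.val+(h-1)) h (by omega)]
  split_ifs <;> omega

lemma fdeg_sun_inr (h : ℕ) (i : Fin h) : fdeg (sunGraph h) (Sum.inr i) = 1 := by
  have : (Finset.univ.filter fun y => (sunGraph h).Adj (Sum.inr i) y) = {Sum.inl i} := by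
    ext w; simp [sun_adj_inr]
  rw [fdeg, this, Finset.card_singleton]

lemma fdeg_sun_inl (h : ℕ) (hh : 3 ≤ h) (i : Fin h) : fdeg (sunGraph h) (Sum.inl i) = 3 := by
  have : (Finset.univ.filter fun y => (sunGraph h).Adj (Sum.inl i) y)
      = {Sum.inl (nxt i), Sum.inl (prv i), Sum.inr i} := by
    ext w; simp [sun_adj_inl h hh]
  rw [fdeg, this]
  rw [Finset.card_insert_of_notMem (by simp [nxt_ne_prv h hh i]),
    Finset.card_insert_of_notMem (by simp), Finset.card_singleton]

lemma fdeg_sun_odd (h : ℕ) (hh : 3 ≤ h) (u : Fin h ⊕ Fin h) : Odd (fdeg (sunGraph h) u) := by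
  cases u with
  | inl i => rw [fdeg_sun_inl h hh]; exact ⟨1, rfl⟩
  | inr i => rw [fdeg_sun_inr h]; exact ⟨0, rfl⟩

lemma matching_fdeg {V : Type*} [Fintype V] {H : SimpleGraph V}
    (hH : IsMatchingClass H) (x : V) : fdeg H x = 1 := by
  obtain ⟨y, hy, hu⟩ := hH x
  rw [fdeg, Finset.card_eq_one]
  refine ⟨y, ?_⟩
  ext z
  simp only [Finset.mem_filter, Finset.mem_univ, true_and, Finset.mem_singleton]
  exact ⟨hu z, fun hz => hz ▸ hy⟩

lemma sunclass_fdeg {v h : ℕ} (hh : 3 ≤ h) {H : SimpleGraph (Fin v)} (hH : IsSunClass h H) :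
    (∀ x : Fin v, Odd (fdeg H x)) ∧ (∑ x : Fin v, fdeg H x = 2 * v) := by
  obtain ⟨k, φ, hb, ha⟩ := hH
  set ψ : Fin k × (Fin h ⊕ Fin h) → Fin v := fun p => φ p.1 p.2 with hψ
  have hbij : Function.Bijective ψ := by
    constructor
    · intro p q hpq
      obtain ⟨w, -, hu⟩ := hb (ψ q)
      rw [hu p hpq, hu q rfl]
    · intro x
      obtain ⟨p, hp, -⟩ := hb x
      exact ⟨p, hp⟩
  have hφinj : ∀ a : Fin k, Function.Injective (φ a) := by
    intro a w w' e
    have h2 := hbij.1 (show ψ (a, w) = ψ (a, w') from e)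
    exact (Prod.ext_iff.mp h2).2
  have hdeg : ∀ p, fdeg H (ψ p) = fdeg (sunGraph h) p.2 := by
    intro p
    have himg : (Finset.univ.filter fun y => H.Adj (ψ p) y)
        = (Finset.univ.filter fun w => (sunGraph h).Adj p.2 w).image (φ p.1) := by
      ext y
      simp only [Finset.mem_filter, Finset.mem_image, Finset.mem_univ, true_and]
      rw [ha]
      constructor
      · rintro ⟨a, u, w, hadj, he, rfl⟩
        have h2 : (a, u) = (p.1, p.2) := hbij.1 (show ψ (a, u) = ψ p from he)
        simp only [Prod.mk.injEq] at h2
        obtain ⟨rfl, rfl⟩ := h2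
        exact ⟨w, hadj, rfl⟩
      · rintro ⟨w, hadj, rfl⟩
        exact ⟨p.1, p.2, w, hadj, rfl, rfl⟩
    rw [fdeg, himg, Finset.card_image_of_injective _ (hφinj p.1), fdeg]
  have hcard : k * (h + h) = v := by
    have := Fintype.card_of_bijective hbij
    simpa using this
  constructor
  · intro x
    obtain ⟨p, rfl⟩ := hbij.2 x
    rw [hdeg]
    exact fdeg_sun_odd h hh p.2
  · calc ∑ x : Fin v, fdeg H x = ∑ p : Fin k × (Fin h ⊕ Fin h), fdeg H (ψ p) :=
          (Fintype.sum_bijective ψ hbij _ _ fun p => rfl).symm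
    _ = ∑ p : Fin k × (Fin h ⊕ Fin h), fdeg (sunGraph h) p.2 :=
          Finset.sum_congr rfl fun p _ => hdeg p
    _ = ∑ _a : Fin k, ∑ u : Fin h ⊕ Fin h, fdeg (sunGraph h) u := by rw [Fintype.sum_prod_type]
    _ = ∑ _a : Fin k, (3 * h + 1 * h) := by
          refine Finset.sum_congr rfl fun a _ => ?_
          rw [Fintype.sum_sum_type]
          simp [fdeg_sun_inl h hh, fdeg_sun_inr h, mul_comm]
    _ = k * (3 * h + 1 * h) := by simp [mul_comm]
    _ = 2 * v := by rw [← hcard]; ring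

lemma fdeg_partition {v : ℕ} {ι : Type*} [Fintype ι] (C : ι → SimpleGraph (Fin v))
    (huniq : ∀ x y : Fin v, (⊤ : SimpleGraph (Fin v)).Adj x y → ∃! i, (C i).Adj x y)
    (x : Fin v) : ∑ i, fdeg (C i) x = v - 1 := by
  have hdisj : ∀ i ∈ Finset.univ, ∀ j ∈ Finset.univ, i ≠ j →
      Disjoint (Finset.univ.filter fun y => (C i).Adj x y)
        (Finset.univ.filter fun y => (C j).Adj x y) := by
    intro i _ j _ hij
    rw [Finset.disjoint_left]
    intro y hy hy'
    simp only [Finset.mem_filter, Finset.mem_univ, true_and] at hy hy'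
    obtain ⟨w, -, hu⟩ := huniq x y (by simpa using hy.ne)
    exact hij ((hu i hy).trans (hu j hy').symm)
  have hcard : (Finset.univ.biUnion fun i => Finset.univ.filter fun y => (C i).Adj x y).card
      = ∑ i, fdeg (C i) x := Finset.card_biUnion hdisj
  have hbU : (Finset.univ.biUnion fun i => Finset.univ.filter fun y => (C i).Adj x y)
      = Finset.univ.erase x := by
    ext y
    simp only [Finset.mem_biUnion, Finset.mem_filter, Finset.mem_univ, true_and,
      Finset.mem_erase, exists_and_left, and_true]
    constructor
    · rintro ⟨i, hi⟩
      exact hi.ne'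
    · intro hy
      obtain ⟨i, hi, -⟩ := huniq x y (by simpa using hy.symm)
      exact ⟨i, hi⟩
  rw [hbU] at hcard
  rw [← hcard, Finset.card_erase_of_mem (Finset.mem_univ x), Finset.card_univ,
    Fintype.card_fin]


end URDAux

open URDAux in
/-- If a `(K₂, S(C_h))`-URD`(v;r,s)` exists with `s > 0`, then `s` is even. -/
theorem stmt_1 (h v r s : ℕ) (hh : 3 ≤ h) (hv : 1 ≤ v) (hs : 0 < s)
    (hurd : IsURD v h r s) : Even s := by
  obtain ⟨C, hle, huniq, hmat, hsun⟩ := hurd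
  have hpart := fdeg_partition C huniq
  have hsunF := fun j => sunclass_fdeg hh (hsun j)
  -- global count
  have hglob : v * (v - 1) = r * v + s * (2 * v) := by
    calc v * (v - 1) = ∑ _x : Fin v, (v - 1) := by simp [mul_comm]
    _ = ∑ x : Fin v, ∑ i, fdeg (C i) x := Finset.sum_congr rfl fun x _ => (hpart x).symm
    _ = ∑ i, ∑ x : Fin v, fdeg (C i) x := Finset.sum_comm
    _ = (∑ i : Fin r, ∑ x : Fin v, fdeg (C (Sum.inl i)) x)
        + ∑ j : Fin s, ∑ x : Fin v, fdeg (C (Sum.inr j)) x := by rw [Fintype.sum_sum_type]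
    _ = (∑ _i : Fin r, v) + ∑ _j : Fin s, 2 * v := by
          congr 1
          · exact Finset.sum_congr rfl fun i _ => by
              simp [matching_fdeg (hmat i)]
          · exact Finset.sum_congr rfl fun j _ => (hsunF j).2
    _ = r * v + s * (2 * v) := by simp [mul_comm]
  have hv1 : v - 1 = r + 2 * s := by
    have hm : (v - 1) * v = (r + 2 * s) * v := by
      rw [mul_comm (v-1) v, hglob]; ring
    exact Nat.eq_of_mul_eq_mul_right (by omega) hm
  -- pointwise count at one vertex
  set x0 : Fin v := ⟨0, hv⟩ with hx0
  have hp := hpart x0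
  rw [Fintype.sum_sum_type] at hp
  have hmat1 : ∑ i : Fin r, fdeg (C (Sum.inl i)) x0 = r := by
    rw [Finset.sum_congr rfl fun i _ => matching_fdeg (hmat i) x0]; simp
  rw [hmat1] at hp
  have hDmod : (∑ j : Fin s, fdeg (C (Sum.inr j)) x0) % 2 = s % 2 := by
    rw [Finset.sum_nat_mod]
    rw [Finset.sum_congr rfl fun j _ => Nat.odd_iff.mp ((hsunF j).1 x0)]
    simp
  rw [Nat.even_iff]
  omega
end

section
/- Let h ≥ 3 and suppose a (K_2,S(C_h))-URD(v;r,s) exists. Fix any vertex x of K_v, and among the s parallel classes of h-suns let a be the number of classes in which x has degree 3 (i.e. x is a cycle vertex of the h-sun containing it) and b the number of classes in which x has degree 1 (i.e. x is a pendant vertex of the h-sun containing it). Then a = b, and consequently s = 2a. -/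
open SimpleGraph

lemma succ_inj_mod (h x y : ℕ) (hx : x < h) (hy : y < h)
    (he : (x + 1) % h = (y + 1) % h) : x = y := by
  have : x % h = y % h := Nat.ModEq.add_right_cancel rfl he
  rwa [Nat.mod_eq_of_lt hx, Nat.mod_eq_of_lt hy] at this

lemma pred_spec (h : ℕ) (hh : 3 ≤ h) (i : Fin h) :
    ((i.val + (h - 1)) % h + 1) % h = i.val := by
  have : ((i.val + (h - 1)) % h + 1) % h = (i.val + (h - 1) + 1) % h := by
    conv_rhs => rw [Nat.add_mod (i.val + (h-1)) 1]
    rw [Nat.add_mod ((i.val + (h-1)) % h) 1, Nat.mod_mod_of_dvd _ dvd_rfl]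
  rw [this]
  have h2 : i.val + (h - 1) + 1 = i.val + h := by omega
  rw [h2, Nat.add_mod_right, Nat.mod_eq_of_lt i.isLt]

lemma add_ne_mod (h : ℕ) (hh : 3 ≤ h) (m : ℕ) (hm : 0 < m) (hm2 : m < h) (i : Fin h) :
    ((i.val + m) % h ≠ i.val) := by
  intro he
  have : (i.val + m) % h = i.val % h := by rw [he, Nat.mod_eq_of_lt i.isLt]
  have : i.val + m ≡ i.val [MOD h] := this
  have hd := (Nat.modEq_iff_dvd' (Nat.le_add_right i.val m)).mp this.symm
  simp only [Nat.add_sub_cancel_left] at hd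
  have := Nat.le_of_dvd hm hd
  omega

lemma sun_deg_inr (h : ℕ) (hh : 3 ≤ h) (i : Fin h) :
    ((sunGraph h).neighborSet (Sum.inr i)) = {Sum.inl i} := by
  ext w
  simp only [mem_neighborSet, Set.mem_singleton_iff, sunGraph, fromRel_adj]
  constructor
  · rintro ⟨hne, (⟨i', j', h1, h2, h3⟩ | ⟨i', h1, h2⟩) | (⟨i', j', h1, h2, h3⟩ | ⟨i', h1, h2⟩)⟩ <;>
      simp_all
  · rintro rfl
    exact ⟨by simp, Or.inr (Or.inr ⟨i, rfl, rfl⟩)⟩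

lemma sun_deg_inl (h : ℕ) (hh : 3 ≤ h) (i : Fin h) :
    ((sunGraph h).neighborSet (Sum.inl i)) =
      {Sum.inl ⟨(i.val + 1) % h, Nat.mod_lt _ (by omega)⟩,
       Sum.inl ⟨(i.val + (h - 1)) % h, Nat.mod_lt _ (by omega)⟩, Sum.inr i} := by
  ext w
  simp only [mem_neighborSet, Set.mem_insert_iff, Set.mem_singleton_iff, sunGraph, fromRel_adj]
  constructor
  · rintro ⟨hne, (⟨i', j', h1, h2, h3⟩ | ⟨i', h1, h2⟩) | (⟨i', j', h1, h2, h3⟩ | ⟨i', h1, h2⟩)⟩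
    · cases h1; subst h2; left; congr 1; exact Fin.ext h3.symm
    · cases h1; right; right; exact h2
    · subst h1; cases h2
      right; left; congr 1
      apply Fin.ext
      exact succ_inj_mod h _ _ i'.isLt (Nat.mod_lt _ (by omega))
        (by rw [h3, (pred_spec h hh i)])
    · exact absurd h2 (by simp)
  · rintro (rfl | rfl | rfl)
    · refine ⟨?_, Or.inl (Or.inl ⟨i, _, rfl, rfl, rfl⟩)⟩
      simp only [ne_eq, Sum.inl.injEq]
      intro he
      have := congrArg Fin.val he
      exact add_ne_mod h hh 1 (by omega) (by omega) i this.symm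
    · refine ⟨?_, Or.inr (Or.inl ⟨_, i, rfl, rfl, pred_spec h hh i⟩)⟩
      simp only [ne_eq, Sum.inl.injEq]
      intro he
      have := congrArg Fin.val he
      exact add_ne_mod h hh (h-1) (by omega) (by omega) i this.symm
    · exact ⟨by simp, Or.inl (Or.inr ⟨i, rfl, rfl⟩)⟩


lemma diff_ne (h : ℕ) (hh : 3 ≤ h) (i : Fin h) :
    (i.val + 1) % h ≠ (i.val + (h - 1)) % h := by
  intro he
  have h1 : ((i.val + 1) % h + 1) % h = (i.val + 2) % h := by
    rw [Nat.mod_add_mod]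
  have h2 := pred_spec h hh i
  rw [he, h2] at h1
  exact add_ne_mod h hh 2 (by omega) (by omega) i h1.symm

lemma sun_ncard_inl (h : ℕ) (hh : 3 ≤ h) (i : Fin h) :
    ((sunGraph h).neighborSet (Sum.inl i)).ncard = 3 := by
  rw [sun_deg_inl h hh i]
  rw [Set.ncard_insert_of_notMem, Set.ncard_insert_of_notMem, Set.ncard_singleton]
  · simp only [Set.mem_singleton_iff]; simp
  · simp only [Set.mem_insert_iff, Set.mem_singleton_iff]
    push_neg
    refine ⟨?_, by simp⟩
    simp only [Sum.inl.injEq, ne_eq]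
    intro he
    exact diff_ne h hh i (congrArg Fin.val he)

lemma sun_ncard_inr (h : ℕ) (hh : 3 ≤ h) (i : Fin h) :
    ((sunGraph h).neighborSet (Sum.inr i)).ncard = 1 := by
  rw [sun_deg_inr h hh i, Set.ncard_singleton]

section ClassLemma
variable {V : Type*} {h : ℕ} {H : SimpleGraph V}

lemma sunClass_dichotomy (hh : 3 ≤ h) (hH : IsSunClass h H) :
    (∀ x, (H.neighborSet x).ncard = 3 ∨ (H.neighborSet x).ncard = 1) ∧
    {x | (H.neighborSet x).ncard = 3}.ncard = {x | (H.neighborSet x).ncard = 1}.ncard := by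
  obtain ⟨k, φ, hbij, hadj⟩ := hH
  set f : Fin k × (Fin h ⊕ Fin h) → V := fun p => φ p.1 p.2 with hf
  have hfbij : Function.Bijective f := Function.bijective_iff_existsUnique f |>.mpr hbij
  have hfinj : Function.Injective f := hfbij.injective
  have hnbhd : ∀ c u, H.neighborSet (φ c u) = φ c '' (sunGraph h).neighborSet u := by
    intro c u
    ext y
    simp only [mem_neighborSet, Set.mem_image]
    constructor
    · intro hy
      obtain ⟨a', u', w', hsadj, he1, he2⟩ := (hadj _ _).mp hy
      obtain ⟨rfl, rfl⟩ := Prod.ext_iff.mp (hfinj (show f (a', u') = f (c, u) from he1))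
      exact ⟨w', hsadj, he2⟩
    · rintro ⟨w, hw, rfl⟩
      exact (hadj _ _).mpr ⟨c, u, w, hw, rfl, rfl⟩
  have hdeg : ∀ c u, (H.neighborSet (φ c u)).ncard = ((sunGraph h).neighborSet u).ncard := by
    intro c u
    rw [hnbhd]
    exact Set.ncard_image_of_injective _ (fun a b hab => by
      have : f (c, a) = f (c, b) := hab
      exact (Prod.mk.injEq .. ▸ hfinj this).2)
  have hdeg3 : ∀ c i, (H.neighborSet (φ c (Sum.inl i))).ncard = 3 := fun c i => by
    rw [hdeg]; exact sun_ncard_inl h hh i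
  have hdeg1 : ∀ c i, (H.neighborSet (φ c (Sum.inr i))).ncard = 1 := fun c i => by
    rw [hdeg]; exact sun_ncard_inr h hh i
  constructor
  · intro x
    obtain ⟨p, rfl⟩ := hfbij.surjective x
    obtain ⟨c, u⟩ := p
    cases u with
    | inl i => exact Or.inl (hdeg3 c i)
    | inr i => exact Or.inr (hdeg1 c i)
  · have hset3 : {x | (H.neighborSet x).ncard = 3} = f '' {p | ∃ i, p.2 = Sum.inl i} := by
      ext x
      simp only [Set.mem_setOf_eq, Set.mem_image]
      constructor
      · intro hx
        obtain ⟨⟨c, u⟩, rfl⟩ := hfbij.surjective x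
        cases u with
        | inl i => exact ⟨(c, Sum.inl i), ⟨i, rfl⟩, rfl⟩
        | inr i => exact absurd hx (by rw [show f (c, Sum.inr i) = φ c (Sum.inr i) from rfl, hdeg1]; omega)
      · rintro ⟨⟨c, u⟩, ⟨i, rfl⟩, rfl⟩
        exact hdeg3 c i
    have hset1 : {x | (H.neighborSet x).ncard = 1} = f '' {p | ∃ i, p.2 = Sum.inr i} := by
      ext x
      simp only [Set.mem_setOf_eq, Set.mem_image]
      constructor
      · intro hx
        obtain ⟨⟨c, u⟩, rfl⟩ := hfbij.surjective x
        cases u with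
        | inl i => exact absurd hx (by rw [show f (c, Sum.inl i) = φ c (Sum.inl i) from rfl, hdeg3]; omega)
        | inr i => exact ⟨(c, Sum.inr i), ⟨i, rfl⟩, rfl⟩
      · rintro ⟨⟨c, u⟩, ⟨i, rfl⟩, rfl⟩
        exact hdeg1 c i
    rw [hset3, hset1, Set.ncard_image_of_injective _ hfinj, Set.ncard_image_of_injective _ hfinj]
    set e : (Fin k × (Fin h ⊕ Fin h)) ≃ (Fin k × (Fin h ⊕ Fin h)) :=
      Equiv.prodCongr (Equiv.refl _) (Equiv.sumComm _ _) with he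
    have : {p : Fin k × (Fin h ⊕ Fin h) | ∃ i, p.2 = Sum.inr i} =
        e '' {p | ∃ i, p.2 = Sum.inl i} := by
      ext ⟨c, u⟩
      simp only [Set.mem_setOf_eq, Set.mem_image, he, Equiv.prodCongr_apply, Equiv.coe_refl]
      constructor
      · rintro ⟨i, rfl⟩
        exact ⟨(c, Sum.inl i), ⟨i, rfl⟩, rfl⟩
      · rintro ⟨⟨c', u'⟩, ⟨i, rfl⟩, hp⟩
        simp only [Prod.map, Equiv.sumComm_apply, Sum.swap_inl, Prod.mk.injEq] at hp
        exact ⟨i, hp.2.symm⟩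
    rw [this, Set.ncard_image_of_injective _ e.injective]
end ClassLemma

/-- In any `(K₂, S(C_h))`-URD`(v;r,s)`, for any vertex `x`, the number `a` of
`h`-sun classes in which `x` has degree `3` equals the number `b` of `h`-sun
classes in which `x` has degree `1`; consequently `s = 2a`. -/
theorem stmt_3 (h v r s : ℕ) (hh : 3 ≤ h)
    (C : Fin r ⊕ Fin s → SimpleGraph (Fin v))
    (hdecomp : ∀ x y : Fin v, x ≠ y → ∃! i, (C i).Adj x y)
    (hmatch : ∀ i : Fin r, IsMatchingClass (C (Sum.inl i)))
    (hsun : ∀ j : Fin s, IsSunClass h (C (Sum.inr j)))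
    (x : Fin v) (a b : ℕ)
    (ha : a = {j : Fin s | ((C (Sum.inr j)).neighborSet x).ncard = 3}.ncard)
    (hb : b = {j : Fin s | ((C (Sum.inr j)).neighborSet x).ncard = 1}.ncard) :
    a = b ∧ s = 2 * a := by
  classical
  set d : Fin s → Fin v → ℕ := fun j y => ((C (Sum.inr j)).neighborSet y).ncard with hd
  have hdich : ∀ j y, d j y = 3 ∨ d j y = 1 := fun j y =>
    (sunClass_dichotomy hh (hsun j)).1 y
  -- within each class, #degree-3 vertices = #degree-1 vertices
  have hclasscount : ∀ j : Fin s,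
      (Finset.univ.filter fun y => d j y = 3).card =
      (Finset.univ.filter fun y => d j y = 1).card := by
    intro j
    have := (sunClass_dichotomy hh (hsun j)).2
    rwa [Set.ncard_eq_toFinset_card', Set.ncard_eq_toFinset_card',
      Set.toFinset_setOf, Set.toFinset_setOf] at this
  -- counts at a vertex
  set A : Fin v → ℕ := fun y => (Finset.univ.filter fun j => d j y = 3).card with hA
  set B : Fin v → ℕ := fun y => (Finset.univ.filter fun j => d j y = 1).card with hB
  have ha' : a = A x := by
    rw [ha, Set.ncard_eq_toFinset_card', Set.toFinset_setOf]
  have hb' : b = B x := by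
    rw [hb, Set.ncard_eq_toFinset_card', Set.toFinset_setOf]
  have hAB : ∀ y, A y + B y = s := by
    intro y
    have h1 : (Finset.univ.filter fun j => d j y = 1) =
        (Finset.univ.filter fun j => ¬ d j y = 3) := by
      apply Finset.filter_congr
      intro j _
      rcases hdich j y with h3 | h3 <;> simp [h3]
    show (Finset.univ.filter fun j => d j y = 3).card +
      (Finset.univ.filter fun j => d j y = 1).card = s
    rw [h1, Finset.card_filter_add_card_filter_not, Finset.card_univ,
      Fintype.card_fin]
  -- degree sum at each vertex
  have hdegsum : ∀ y : Fin v, ∑ i : Fin r ⊕ Fin s, (((C i).neighborSet y).toFinset).card = v - 1 := by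
    intro y
    have hcover : (Finset.univ.erase y) =
        Finset.univ.biUnion (fun i => ((C i).neighborSet y).toFinset) := by
      ext z
      simp only [Finset.mem_erase, Finset.mem_univ, and_true, Finset.mem_biUnion,
        Set.mem_toFinset, mem_neighborSet, true_and]
      constructor
      · intro hz
        obtain ⟨i, hi, -⟩ := hdecomp y z (Ne.symm hz)
        exact ⟨i, hi⟩
      · rintro ⟨i, hi⟩
        exact hi.ne'
    have hdisj : ∀ i ∈ (Finset.univ : Finset (Fin r ⊕ Fin s)), ∀ i' ∈ Finset.univ,
        i ≠ i' → Disjoint (((C i).neighborSet y).toFinset) (((C i').neighborSet y).toFinset) := by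
      intro i _ i' _ hne
      rw [Finset.disjoint_left]
      intro z hz hz'
      rw [Set.mem_toFinset, mem_neighborSet] at hz hz'
      obtain ⟨w, -, huniq⟩ := hdecomp y z (hz.ne)
      exact hne ((huniq i hz).trans (huniq i' hz').symm)
    rw [← Finset.card_biUnion hdisj, ← hcover, Finset.card_erase_of_mem (Finset.mem_univ y),
      Finset.card_univ, Fintype.card_fin]
  -- matching classes have degree one
  have hmdeg : ∀ (i : Fin r) (y : Fin v), (((C (Sum.inl i)).neighborSet y).toFinset).card = 1 := by
    intro i y
    obtain ⟨z, hz, huniq⟩ := hmatch i y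
    rw [Finset.card_eq_one]
    exact ⟨z, by
      ext w
      simp only [Set.mem_toFinset, mem_neighborSet, Finset.mem_singleton]
      exact ⟨fun hw => huniq w hw, fun hw => hw ▸ hz⟩⟩
  -- sun class degree as finset card
  have hsdeg : ∀ (j : Fin s) (y : Fin v), (((C (Sum.inr j)).neighborSet y).toFinset).card = d j y := by
    intro j y
    exact (Set.ncard_eq_toFinset_card' _).symm
  -- per-vertex equation: v - 1 = r + 3 * A y + (s - A y)
  have hAconst : ∀ y z : Fin v, A y = A z := by
    have key : ∀ y : Fin v, r + (2 * A y + s) = v - 1 := by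
      intro y
      have h1 := hdegsum y
      rw [Fintype.sum_sum_type] at h1
      have h2 : ∑ i : Fin r, (((C (Sum.inl i)).neighborSet y).toFinset).card = r := by
        simp [hmdeg]
      have h3 : ∑ j : Fin s, (((C (Sum.inr j)).neighborSet y).toFinset).card = 3 * A y + (s - A y) := by
        have e1 : ∑ j : Fin s, (((C (Sum.inr j)).neighborSet y).toFinset).card = ∑ j : Fin s, d j y := by
          exact Finset.sum_congr rfl fun j _ => hsdeg j y
        rw [e1, ← Finset.sum_filter_add_sum_filter_not Finset.univ (fun j => d j y = 3)]
        have e2 : ∑ j ∈ Finset.univ.filter (fun j => d j y = 3), d j y = 3 * A y := by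
          rw [Finset.sum_congr rfl (fun j hj => (Finset.mem_filter.mp hj).2),
            Finset.sum_const, smul_eq_mul, mul_comm]
        have e3 : ∑ j ∈ Finset.univ.filter (fun j => ¬ d j y = 3), d j y =
            (Finset.univ.filter fun j => ¬ d j y = 3).card := by
          rw [Finset.sum_congr rfl (fun j hj => by
            rcases hdich j y with h3 | h1
            · exact absurd h3 (Finset.mem_filter.mp hj).2
            · exact h1), Finset.sum_const, smul_eq_mul, mul_one]
        have e4 : (Finset.univ.filter fun j => ¬ d j y = 3).card = s - A y := by
          have := Finset.card_filter_add_card_filter_not (s := Finset.univ)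
            (p := fun j => d j y = 3)
          rw [Finset.card_univ, Fintype.card_fin] at this
          have hAy : A y = (Finset.univ.filter fun j => d j y = 3).card := rfl
          omega
        rw [e2, e3, e4]
      rw [h2, h3] at h1
      have hAle : A y ≤ s := by
        rw [hA]
        calc (Finset.univ.filter fun j => d j y = 3).card ≤ Finset.univ.card :=
              Finset.card_filter_le _ _
          _ = s := by rw [Finset.card_univ, Fintype.card_fin]
      omega
    intro y z
    have := key y
    have := key z
    omega
  -- double counting
  have hsum3 : ∑ y : Fin v, A y = ∑ j : Fin s, (Finset.univ.filter fun y => d j y = 3).card := by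
    simp only [hA, Finset.card_filter]
    exact Finset.sum_comm
  have hsum1 : ∑ y : Fin v, B y = ∑ j : Fin s, (Finset.univ.filter fun y => d j y = 1).card := by
    simp only [hB, Finset.card_filter]
    exact Finset.sum_comm
  have hsumeq : ∑ y : Fin v, A y = ∑ y : Fin v, B y := by
    rw [hsum3, hsum1]
    exact Finset.sum_congr rfl fun j _ => hclasscount j
  have hconstsum : ∑ y : Fin v, A y = v * A x :=
    by rw [Finset.sum_congr rfl fun y _ => hAconst y x, Finset.sum_const, Finset.card_univ,
      Fintype.card_fin, smul_eq_mul]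
  have hBconst : ∀ y, B y = s - A x := by
    intro y
    have h1 := hAB y
    have h2 := hAconst y x
    omega
  have hconstsum' : ∑ y : Fin v, B y = v * (s - A x) := by
    rw [Finset.sum_congr rfl fun y _ => hBconst y, Finset.sum_const, Finset.card_univ,
      Fintype.card_fin, smul_eq_mul]
  have hvpos : 0 < v := x.pos
  have hfinal : A x = s - A x := by
    have := hconstsum ▸ hsumeq
    rw [hconstsum'] at this
    exact Nat.eq_of_mul_eq_mul_left hvpos this
  have hAs := hAB x
  rw [ha', hb']
  omega
end

section
/- Let h ≥ 3 be odd and let v ≡ 2h (mod 4h). If there exists a (K_2,S(C_h))-URD(v;r,s) with s > 0, then r ≡ 1 (mod 4). -/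
open SimpleGraph

open scoped Classical

noncomputable def adeg {V : Type*} [Fintype V] (H : SimpleGraph V) (x : V) : ℕ :=
  (Finset.univ.filter (fun y => H.Adj x y)).card

lemma succ_mod_eq_iff {h a b : ℕ} (hlt : a < h) (hb : b < h) :
    (a + 1) % h = b ↔ ((a + 1 = h ∧ b = 0) ∨ a + 1 = b) := by
  rcases Nat.lt_or_ge (a + 1) h with hl | hg
  · rw [Nat.mod_eq_of_lt hl]; omega
  · have he : a + 1 = h := by omega
    rw [he, Nat.mod_self]; omega

lemma sun_adj_inr {h : ℕ} (i : Fin h) (z : Fin h ⊕ Fin h) :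
    (sunGraph h).Adj (Sum.inr i) z ↔ z = Sum.inl i := by
  simp only [sunGraph, fromRel_adj]
  constructor
  · rintro ⟨hne, (⟨a, b, ha, hb, hab⟩ | ⟨a, ha, hb⟩) | (⟨a, b, ha, hb, hab⟩ | ⟨a, ha, hb⟩)⟩ <;>
      simp_all
  · rintro rfl
    exact ⟨by simp, Or.inr (Or.inr ⟨i, rfl, rfl⟩)⟩

lemma adeg_sun_inr {h : ℕ} (i : Fin h) : adeg (sunGraph h) (Sum.inr i) = 1 := by
  rw [adeg, Finset.card_eq_one]
  exact ⟨Sum.inl i, by ext z; simp [sun_adj_inr]⟩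

lemma sun_adj_inl {h : ℕ} (hh : 3 ≤ h) (i : Fin h) (z : Fin h ⊕ Fin h) :
    (sunGraph h).Adj (Sum.inl i) z ↔
      z = Sum.inl ⟨(i.val + 1) % h, Nat.mod_lt _ (by omega)⟩ ∨
      z = Sum.inl ⟨if i.val = 0 then h - 1 else i.val - 1,
            by have := i.isLt; split <;> omega⟩ ∨
      z = Sum.inr i := by
  have hilt := i.isLt
  have hmod : (i.val + 1) % h = if i.val + 1 = h then 0 else i.val + 1 := by
    split
    · next he => rw [he, Nat.mod_self]
    · next he => exact Nat.mod_eq_of_lt (by omega)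
  simp only [sunGraph, fromRel_adj]
  constructor
  · rintro ⟨hne, (⟨a, b, ha, hb, hab⟩ | ⟨a, ha, hb⟩) | (⟨a, b, ha, hb, hab⟩ | ⟨a, ha, hb⟩)⟩
    · obtain rfl : i = a := by simpa using ha
      subst hb
      left
      congr 1
      exact Fin.ext hab.symm
    · obtain rfl : i = a := by simpa using ha
      subst hb
      right; right; rfl
    · obtain rfl : i = b := by simpa using hb
      subst ha
      right; left
      have halt := a.isLt
      rw [succ_mod_eq_iff halt hilt] at hab
      congr 1
      apply Fin.ext
      show a.val = if (i : ℕ) = 0 then h - 1 else (i : ℕ) - 1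
      split <;> omega
    · exact absurd hb (by simp)
  · rintro (rfl | rfl | rfl)
    · refine ⟨?_, Or.inl (Or.inl ⟨i, _, rfl, rfl, rfl⟩)⟩
      intro hcon
      have hval : i.val = (i.val + 1) % h := congrArg Fin.val (Sum.inl.inj hcon)
      rw [hmod] at hval
      split at hval <;> omega
    · constructor
      · intro hcon
        have hval : i.val = if i.val = 0 then h - 1 else i.val - 1 :=
          congrArg Fin.val (Sum.inl.inj hcon)
        split at hval <;> omega
      · refine Or.inr (Or.inl ⟨_, i, rfl, rfl, ?_⟩)
        show ((if i.val = 0 then h - 1 else i.val - 1) + 1) % h = i.val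
        split
        · next he => rw [Nat.sub_add_cancel (by omega : 1 ≤ h), Nat.mod_self]; omega
        · next he =>
            rw [Nat.sub_add_cancel (by omega : 1 ≤ i.val)]
            exact Nat.mod_eq_of_lt hilt
    · exact ⟨by simp, Or.inl (Or.inr ⟨i, rfl, rfl⟩)⟩

lemma adeg_sun_inl {h : ℕ} (hh : 3 ≤ h) (i : Fin h) :
    adeg (sunGraph h) (Sum.inl i) = 3 := by
  have hilt := i.isLt
  have hmod : (i.val + 1) % h = if i.val + 1 = h then 0 else i.val + 1 := by
    split
    · next he => rw [he, Nat.mod_self]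
    · next he => exact Nat.mod_eq_of_lt (by omega)
  rw [adeg]
  have hset : (Finset.univ.filter (fun z => (sunGraph h).Adj (Sum.inl i) z)) =
      {Sum.inl ⟨(i.val + 1) % h, Nat.mod_lt _ (by omega)⟩,
       Sum.inl ⟨if i.val = 0 then h - 1 else i.val - 1,
            by have := i.isLt; split <;> omega⟩,
       Sum.inr i} := by
    ext z
    simp [sun_adj_inl hh i z]
  rw [hset, Finset.card_insert_of_notMem, Finset.card_insert_of_notMem,
    Finset.card_singleton]
  · simp
  · simp only [Finset.mem_insert, Finset.mem_singleton]
    rintro (hcon | hcon)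
    · have hval : (i.val + 1) % h = (if i.val = 0 then h - 1 else i.val - 1) :=
        congrArg Fin.val (Sum.inl.inj hcon)
      rw [hmod] at hval
      split at hval <;> split at hval <;> omega
    · simp at hcon

lemma adeg_matching {V : Type*} [Fintype V] {H : SimpleGraph V}
    (hH : IsMatchingClass H) (x : V) : adeg H x = 1 := by
  obtain ⟨y, hy, hu⟩ := hH x
  rw [adeg, Finset.card_eq_one]
  refine ⟨y, Finset.eq_singleton_iff_unique_mem.mpr
    ⟨Finset.mem_filter.mpr ⟨Finset.mem_univ _, hy⟩,
     fun z hz => hu z (Finset.mem_filter.mp hz).2⟩⟩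

lemma sunclass_adeg {V : Type*} [Fintype V] {H : SimpleGraph V} {h : ℕ} (hh : 3 ≤ h)
    (hH : IsSunClass h H) :
    (∀ x, adeg H x = 1 ∨ adeg H x = 3) ∧ (∑ x, adeg H x = 2 * Fintype.card V) := by
  obtain ⟨k, φ, hbij, hadj⟩ := hH
  have hinj : Function.Injective (fun p : Fin k × (Fin h ⊕ Fin h) => φ p.1 p.2) := by
    intro p q hpq
    exact ((hbij (φ q.1 q.2)).unique hpq rfl)
  have hsurj : Function.Surjective (fun p : Fin k × (Fin h ⊕ Fin h) => φ p.1 p.2) := by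
    intro x
    obtain ⟨p, hp, -⟩ := hbij x
    exact ⟨p, hp⟩
  let e : (Fin k × (Fin h ⊕ Fin h)) ≃ V := Equiv.ofBijective _ ⟨hinj, hsurj⟩
  have htrans : ∀ (a : Fin k) (u : Fin h ⊕ Fin h),
      adeg H (φ a u) = adeg (sunGraph h) u := by
    intro a u
    have himg : Finset.univ.filter (fun y => H.Adj (φ a u) y) =
        (Finset.univ.filter (fun w => (sunGraph h).Adj u w)).image (φ a) := by
      ext y
      simp only [Finset.mem_filter, Finset.mem_univ, true_and, Finset.mem_image]
      rw [hadj]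
      constructor
      · rintro ⟨a', u', w, hw, hx, hy⟩
        have : (a', u') = (a, u) := hinj hx
        obtain ⟨rfl, rfl⟩ := Prod.mk.injEq .. ▸ this
        exact ⟨w, hw, hy⟩
      · rintro ⟨w, hw, hy⟩
        exact ⟨a, u, w, hw, rfl, hy⟩
    rw [adeg, himg, Finset.card_image_of_injective _ (fun w w' hww' =>
      (Prod.mk.injEq .. ▸ hinj (show φ a w = φ a w' from hww') : a = a ∧ w = w').2), adeg]
  constructor
  · intro x
    obtain ⟨⟨a, u⟩, rfl⟩ := hsurj x
    rcases u with i | i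
    · right; rw [htrans, adeg_sun_inl hh]
    · left; rw [htrans, adeg_sun_inr]
  · have hcard : Fintype.card V = k * (2 * h) := by
      rw [← Fintype.card_congr e, Fintype.card_prod, Fintype.card_sum,
        Fintype.card_fin, Fintype.card_fin]
      ring
    rw [hcard]
    rw [← Equiv.sum_comp e (adeg H)]
    have : ∀ p : Fin k × (Fin h ⊕ Fin h), adeg H (e p) = adeg (sunGraph h) p.2 := by
      rintro ⟨a, u⟩
      show adeg H (φ a u) = adeg (sunGraph h) u
      exact htrans a u
    rw [Finset.sum_congr rfl fun p _ => this p]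
    rw [Fintype.sum_prod_type]
    have hin : ∀ a : Fin k, ∑ u : Fin h ⊕ Fin h, adeg (sunGraph h) u = 4 * h := by
      intro a
      rw [Fintype.sum_sum_type]
      simp [adeg_sun_inl hh, adeg_sun_inr, Finset.sum_const, Finset.card_univ]
      ring
    rw [Finset.sum_congr rfl fun a _ => hin a]
    simp [Finset.sum_const, Finset.card_univ]
    ring

/-- If `h` is odd, `v ≡ 2h (mod 4h)` and a `(K₂, S(C_h))`-URD`(v;r,s)` exists
with `s > 0`, then `r ≡ 1 (mod 4)`. -/
theorem stmt_5 (h v r s : ℕ) (hh : 3 ≤ h) (hodd : Odd h)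
    (hv : v % (4 * h) = 2 * h) (hs : 0 < s)
    (hurd : IsURD v h r s) : r % 4 = 1 := by
  classical
  obtain ⟨C, hle, huniq, hmat, hsun⟩ := hurd
  -- v ≡ 2 (mod 4)
  have hv4 : v % 4 = 2 := by
    have hdm := Nat.div_add_mod v (4 * h)
    rw [hv] at hdm
    obtain ⟨m, hm'⟩ := hodd
    generalize v / (4 * h) = q at hdm
    have key : 4 * (h * q) + 2 * h = v := by rw [← hdm]; ring
    generalize h * q = A at key
    omega
  have hvpos : 0 < v := by omega
  -- degree sum at each vertex
  have hkey : ∀ x : Fin v, ∑ i, adeg (C i) x = v - 1 := by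
    intro x
    have h1 : ∀ i, adeg (C i) x = ∑ y : Fin v, if (C i).Adj x y then 1 else 0 :=
      fun i => Finset.card_filter _ _
    rw [Finset.sum_congr rfl fun i _ => h1 i, Finset.sum_comm]
    have h2 : ∀ y : Fin v, (∑ i, if (C i).Adj x y then 1 else 0)
        = if y = x then 0 else 1 := by
      intro y
      by_cases hxy : y = x
      · rw [if_pos hxy]
        subst hxy
        exact Finset.sum_eq_zero fun i _ => if_neg ((C i).irrefl)
      · rw [if_neg hxy]
        obtain ⟨i0, hi0, hun⟩ := huniq x y (by rw [SimpleGraph.top_adj]; exact fun hc => hxy hc.symm)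
        rw [Finset.sum_boole]
        rw [show Finset.univ.filter (fun i => (C i).Adj x y) = {i0} from
          Finset.eq_singleton_iff_unique_mem.mpr
            ⟨Finset.mem_filter.mpr ⟨Finset.mem_univ _, hi0⟩,
             fun z hz => hun z (Finset.mem_filter.mp hz).2⟩]
        simp
    rw [Finset.sum_congr rfl fun y _ => h2 y]
    rw [Finset.sum_ite, Finset.sum_const, Finset.sum_const]
    simp [Finset.filter_ne', Finset.card_erase_of_mem]
  have hm : ∀ (i : Fin r) (x : Fin v), adeg (C (Sum.inl i)) x = 1 :=
    fun i x => adeg_matching (hmat i) x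
  have hsd := fun j : Fin s => sunclass_adeg hh (hsun j)
  -- global count : r + 2*s = v - 1
  have hg1 : ∑ x : Fin v, ∑ i, adeg (C i) x = v * (v - 1) := by
    rw [Finset.sum_congr rfl fun x _ => hkey x]
    simp [Finset.sum_const, Finset.card_univ, mul_comm]
  have hg2 : ∑ x : Fin v, ∑ i, adeg (C i) x = r * v + s * (2 * v) := by
    rw [Finset.sum_comm, Fintype.sum_sum_type]
    have e1 : ∀ i : Fin r, ∑ x : Fin v, adeg (C (Sum.inl i)) x = v := by
      intro i; simp [hm]
    have e2 : ∀ j : Fin s, ∑ x : Fin v, adeg (C (Sum.inr j)) x = 2 * v := by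
      intro j
      have := (hsd j).2
      simpa using this
    rw [Finset.sum_congr rfl fun i _ => e1 i, Finset.sum_congr rfl fun j _ => e2 j]
    simp [Finset.sum_const, Finset.card_univ, mul_comm]
  have hglob : r + 2 * s = v - 1 := by
    have hmul : (r + 2 * s) * v = (v - 1) * v := by
      calc (r + 2 * s) * v = r * v + s * (2 * v) := by ring
        _ = v * (v - 1) := by rw [← hg2, hg1]
        _ = (v - 1) * v := by ring
    exact Nat.eq_of_mul_eq_mul_right hvpos hmul
  -- local count at one vertex
  set x0 : Fin v := ⟨0, hvpos⟩ with hx0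
  have hloc := hkey x0
  rw [Fintype.sum_sum_type] at hloc
  have hr : ∑ i : Fin r, adeg (C (Sum.inl i)) x0 = r := by simp [hm]
  rw [hr] at hloc
  set t := (Finset.univ.filter (fun j : Fin s => adeg (C (Sum.inr j)) x0 = 3)).card with ht
  have htle : t ≤ s := le_trans (Finset.card_filter_le _ _) (by simp)
  have hsum_d : ∑ j : Fin s, adeg (C (Sum.inr j)) x0 = 3 * t + (s - t) := by
    rw [← Finset.sum_filter_add_sum_filter_not Finset.univ
      (fun j => adeg (C (Sum.inr j)) x0 = 3)]
    have e1 : ∑ j ∈ Finset.univ.filter (fun j : Fin s => adeg (C (Sum.inr j)) x0 = 3),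
        adeg (C (Sum.inr j)) x0 = 3 * t := by
      rw [Finset.sum_congr rfl fun j hj => (Finset.mem_filter.mp hj).2,
        Finset.sum_const, smul_eq_mul, ← ht]
      ring
    have e2 : ∑ j ∈ Finset.univ.filter (fun j : Fin s => ¬ adeg (C (Sum.inr j)) x0 = 3),
        adeg (C (Sum.inr j)) x0 = s - t := by
      have hone : ∀ j ∈ Finset.univ.filter
          (fun j : Fin s => ¬ adeg (C (Sum.inr j)) x0 = 3),
          adeg (C (Sum.inr j)) x0 = 1 := by
        intro j hj
        exact ((hsd j).1 x0).resolve_right (Finset.mem_filter.mp hj).2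
      rw [Finset.sum_congr rfl hone, Finset.sum_const, smul_eq_mul, mul_one]
      have hcards := Finset.card_filter_add_card_filter_not
        (s := (Finset.univ : Finset (Fin s)))
        (p := fun j : Fin s => adeg (C (Sum.inr j)) x0 = 3)
      simp only [Finset.card_univ, Fintype.card_fin] at hcards
      omega
    rw [e1, e2]
  rw [hsum_d] at hloc
  omega
end

section
/- There exists a (K_2,S(C_3))-URD(6;1,2): the edge set of the complete graph K_6 can be decomposed into one perfect matching and two parallel classes each consisting of a single 3-sun. -/
open SimpleGraph

/-- first sun embedding: triangle 0 1 2, pendants 3 4 5 -/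
def f1 : Fin 3 ⊕ Fin 3 → Fin 6 := Sum.elim ![0, 1, 2] ![3, 4, 5]

/-- second sun embedding: triangle 3 4 5, pendants 2 0 1 -/
def f2 : Fin 3 ⊕ Fin 3 → Fin 6 := Sum.elim ![3, 4, 5] ![2, 0, 1]

/-- matching 0-5, 1-3, 2-4 -/
def M6 : SimpleGraph (Fin 6) :=
  SimpleGraph.fromRel fun x y =>
    (x = 0 ∧ y = 5) ∨ (x = 1 ∧ y = 3) ∨ (x = 2 ∧ y = 4)

def S1 : SimpleGraph (Fin 6) :=
  SimpleGraph.fromRel fun x y => ∃ u w, (sunGraph 3).Adj u w ∧ f1 u = x ∧ f1 w = y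

def S2 : SimpleGraph (Fin 6) :=
  SimpleGraph.fromRel fun x y => ∃ u w, (sunGraph 3).Adj u w ∧ f2 u = x ∧ f2 w = y

def Cfun : Fin 1 ⊕ Fin 2 → SimpleGraph (Fin 6)
  | Sum.inl _ => M6
  | Sum.inr 0 => S1
  | Sum.inr 1 => S2

instance {α : Type*} [Fintype α] [DecidableEq α] (p : α → Prop) [DecidablePred p] :
    Decidable (∃! a, p a) :=
  inferInstanceAs (Decidable (∃ a, p a ∧ ∀ b, p b → b = a))

instance : DecidableRel (sunGraph 3).Adj := fun u w =>
  decidable_of_iff _ (SimpleGraph.fromRel_adj _ u w).symm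

instance : DecidableRel M6.Adj := fun u w =>
  decidable_of_iff _ (SimpleGraph.fromRel_adj _ u w).symm

instance : DecidableRel S1.Adj := fun u w =>
  decidable_of_iff _ (SimpleGraph.fromRel_adj _ u w).symm

instance : DecidableRel S2.Adj := fun u w =>
  decidable_of_iff _ (SimpleGraph.fromRel_adj _ u w).symm

instance : ∀ i, DecidableRel (Cfun i).Adj := fun i =>
  match i with
  | Sum.inl _ => inferInstanceAs (DecidableRel M6.Adj)
  | Sum.inr 0 => inferInstanceAs (DecidableRel S1.Adj)
  | Sum.inr 1 => inferInstanceAs (DecidableRel S2.Adj)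

/-- There exists a `(K₂, S(C₃))`-URD`(6;1,2)`. -/
theorem stmt_7 : IsURD 6 3 1 2 := by
  refine ⟨Cfun, fun i => le_top, ?_, ?_, ?_⟩
  · decide
  · intro i
    fin_cases i
    unfold IsMatchingClass
    decide
  · intro j
    fin_cases j
    · exact ⟨1, fun _ => f1, by decide, by decide⟩
    · exact ⟨1, fun _ => f2, by decide, by decide⟩
end

section
/- For every h ≥ 3, there exists a (K_2,S(C_h))-URGDD(0,2) of C_{h(2)}: the edge set of the graph C_{h(2)} can be decomposed into two parallel classes, each consisting of a single h-sun spanning all 2h vertices. -/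
open SimpleGraph

/-- The graph `C_{m(n)}`: vertex set is `m` groups of size `n`, with all edges
between groups `i` and `j` whenever `|i - j| ≡ 1 (mod m)`. -/
def cycleBlowup (m n : ℕ) : SimpleGraph (Fin m × Fin n) :=
  SimpleGraph.fromRel fun u w => (u.1.val + 1) % m = w.1.val

/-! Split each group of `C_{h(2)}` into the layers `0` and `1`. The sun of layer `j` has
the cycle `(i, j) — (i + 1, j)` and the pendant edges `(i, j) — (i + 1, j + 1)`, so it
contains exactly the edges of `C_{h(2)}` that leave layer `j` in the forward direction
`i → i + 1`. For `h ≥ 3` every edge has a unique forward direction (`i + 2 ≠ i`), hence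
lies in exactly one of the two suns. -/

namespace CycleBlowup

variable {h : ℕ} [NeZero h]

@[simp]
lemma val_add_one_mod_eq_iff (a b : Fin h) : (a.val + 1) % h = b.val ↔ b = a + 1 := by
  rw [Fin.ext_iff, Fin.val_add, Fin.val_one', Nat.add_mod_mod, eq_comm]

lemma add_one_add_one_ne_self (hh : 3 ≤ h) (i : Fin h) : i + 1 + 1 ≠ i := by
  rw [Ne, add_assoc, add_eq_left, Fin.ext_iff, Fin.val_add, Fin.val_one',
    Nat.mod_eq_of_lt (by omega : 1 < h), Nat.mod_eq_of_lt (by omega : 2 < h)]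
  simp

lemma fin_two_eq_or_eq_add_one (c j : Fin 2) : c = j ∨ c = j + 1 := by
  revert c j; decide

lemma cycleBlowup_adj {n : ℕ} (x y : Fin h × Fin n) :
    (cycleBlowup h n).Adj x y ↔ x ≠ y ∧ (y.1 = x.1 + 1 ∨ x.1 = y.1 + 1) := by
  simp [cycleBlowup]

def sunLayer (h : ℕ) [NeZero h] (j : Fin 2) : SimpleGraph (Fin h × Fin 2) :=
  SimpleGraph.fromRel fun x y => x.2 = j ∧ y.1 = x.1 + 1

lemma sunLayer_adj (j : Fin 2) (x y : Fin h × Fin 2) :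
    (sunLayer h j).Adj x y ↔
      x ≠ y ∧ (x.2 = j ∧ y.1 = x.1 + 1 ∨ y.2 = j ∧ x.1 = y.1 + 1) :=
  Iff.rfl

lemma sunLayer_le_cycleBlowup (j : Fin 2) : sunLayer h j ≤ cycleBlowup h 2 := by
  intro x y hxy
  rw [sunLayer_adj] at hxy
  rw [cycleBlowup_adj]
  tauto

lemma existsUnique_sunLayer_adj (hh : 3 ≤ h) {x y : Fin h × Fin 2}
    (hxy : (cycleBlowup h 2).Adj x y) : ∃! j, (sunLayer h j).Adj x y := by
  obtain ⟨hne, hfwd | hbwd⟩ := (cycleBlowup_adj x y).1 hxy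
  · refine ⟨x.2, ⟨hne, .inl ⟨rfl, hfwd⟩⟩, ?_⟩
    rintro j ⟨-, ⟨rfl, -⟩ | ⟨-, hbwd⟩⟩
    · rfl
    · exact absurd (by rw [← hfwd, ← hbwd]) (add_one_add_one_ne_self hh x.1)
  · refine ⟨y.2, ⟨hne, .inr ⟨rfl, hbwd⟩⟩, ?_⟩
    rintro j ⟨-, ⟨-, hfwd⟩ | ⟨rfl, -⟩⟩
    · exact absurd (by rw [← hfwd, ← hbwd]) (add_one_add_one_ne_self hh x.1)
    · rfl

def sunEquiv (j : Fin 2) : Fin h ⊕ Fin h ≃ Fin h × Fin 2 where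
  toFun := Sum.elim (fun i => (i, j)) (fun i => (i + 1, j + 1))
  invFun x := if x.2 = j then .inl x.1 else .inr (x.1 - 1)
  left_inv := by rintro (i | i) <;> simp
  right_inv := by
    rintro ⟨i, c⟩
    rcases fin_two_eq_or_eq_add_one c j with rfl | rfl <;> simp

lemma sunLayer_rel_sunEquiv_iff (j : Fin 2) (u w : Fin h ⊕ Fin h) :
    ((sunEquiv j u).2 = j ∧ (sunEquiv j w).1 = (sunEquiv j u).1 + 1) ↔
      (∃ i i' : Fin h, u = .inl i ∧ w = .inl i' ∧ (i.val + 1) % h = i'.val) ∨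
        (∃ i : Fin h, u = .inl i ∧ w = .inr i) := by
  rcases u with a | a <;> rcases w with b | b <;> simp [sunEquiv]

lemma sunLayer_eq_map_sunGraph (j : Fin 2) :
    sunLayer h j = (sunGraph h).map (sunEquiv j) := by
  ext x y
  obtain ⟨u, rfl⟩ := (sunEquiv j).surjective x
  obtain ⟨w, rfl⟩ := (sunEquiv j).surjective y
  refine (sunLayer_adj ..).trans (.trans ?_ (map_adj_apply (f := (sunEquiv j).toEmbedding)).symm)
  rw [sunGraph, fromRel_adj, (sunEquiv j).injective.ne_iff, sunLayer_rel_sunEquiv_iff,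
    sunLayer_rel_sunEquiv_iff]

end CycleBlowup

lemma isSunClass_map_sunGraph {h : ℕ} {V : Type*} (e : Fin h ⊕ Fin h ≃ V) :
    IsSunClass h ((sunGraph h).map e) := by
  refine ⟨1, fun _ => e, fun x => ⟨(0, e.symm x), by simp, ?_⟩, fun x y => ?_⟩
  · rintro ⟨a, u⟩ rfl
    simp [Fin.fin_one_eq_zero a]
  · exact (map_adj e.toEmbedding _ x y).trans
      ⟨fun ⟨u, w, huw⟩ => ⟨0, u, w, huw⟩, fun ⟨_, u, w, huw⟩ => ⟨u, w, huw⟩⟩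

lemma isURGDD_zero_of_sunClasses {V : Type*} {G : SimpleGraph V} {h s : ℕ}
    (C : Fin s → SimpleGraph V) (hle : ∀ j, C j ≤ G)
    (hdecomp : ∀ x y, G.Adj x y → ∃! j, (C j).Adj x y) (hsun : ∀ j, IsSunClass h (C j)) :
    IsURGDD G h 0 s := by
  refine ⟨Sum.elim finZeroElim C, ?_, fun x y hxy => ?_, finZeroElim, hsun⟩
  · rintro (i | j)
    exacts [i.elim0, hle j]
  · obtain ⟨j, hj, huniq⟩ := hdecomp x y hxy
    refine ⟨.inr j, hj, ?_⟩
    rintro (i | i) hi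
    exacts [i.elim0, congrArg Sum.inr (huniq i hi)]

/-- For every `h ≥ 3` there exists a `(K₂, S(C_h))`-URGDD`(0,2)` of `C_{h(2)}`:
a decomposition of `C_{h(2)}` into two parallel classes of `h`-suns. -/
theorem stmt_9 (h : ℕ) (hh : 3 ≤ h) : IsURGDD (cycleBlowup h 2) h 0 2 := by
  have : NeZero h := ⟨by omega⟩
  refine isURGDD_zero_of_sunClasses (CycleBlowup.sunLayer h)
    CycleBlowup.sunLayer_le_cycleBlowup
    (fun _ _ => CycleBlowup.existsUnique_sunLayer_adj hh) fun j => ?_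
  rw [CycleBlowup.sunLayer_eq_map_sunGraph j]
  exact isSunClass_map_sunGraph _
end
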